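/- arXiv:0909.4877 — 2 statements merged into one kernel-verified Lean document; each statement's English description precedes it below -/
import Mathlib

section
/- The dimension of the degree-k component of the Orlik–Solomon algebra of the braid arrangement on n strands (equivalently H^k(Cₙ(2);ℂ)) equals the unsigned Stirling number of the first kind c(n, n−k), i.e. the number of permutations of {1,…,n} with exactly n−k cycles. -/
open Finset

/-- The index data for admissible monomials `A_{i₁,j₁} ⋯ A_{i_k,j_k}` (`i_h < j_h`,
`j₁ < ⋯ < j_k`) in the Orlik–Solomon algebra of the braid arrangement
(`H^*(Cₙ(2); ℂ)` in Arnold's presentation): for each second index `j`, optionally a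
chosen first index `i < j`. -/
def AdmIdx (n : ℕ) : Type :=
  { f : Fin n → Option (Fin n) // ∀ (j : Fin n), ∀ i ∈ f j, i < j }

/-- The length (cohomological degree) of an admissible monomial: the number of
chosen factors. -/
def admSize {n : ℕ} (f : AdmIdx n) : ℕ :=
  (Finset.univ.filter fun j : Fin n => (f.1 j).isSome).card

/-- The number of cycles of a permutation, counting fixed points as cycles (i.e. the
number of blocks of its cycle partition). -/
def numCycles {n : ℕ} (σ : Equiv.Perm (Fin n)) : ℕ :=
  σ.cycleType.card + (Finset.univ.filter fun x : Fin n => σ x = x).card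

/-!
Write an admissible monomial as a choice, for each `j`, of nothing or of one `i < j`, and send
it to the product `τ_{n-1} ⋯ τ_1 τ_0` of the transpositions `τ_j = (i j)` (with `τ_j = 1` when
nothing is chosen at `j`). When `τ_j` is applied, `j` is still a fixed point of the partial
product, so evaluating at `j` recovers the choice at `j`: the map is a bijection onto all
permutations. Multiplying by a transposition `(i j)` with `j` a fixed point splices `j` into the
cycle of `i`, so each chosen factor lowers the number of cycles by exactly one, from `n` down to
`n - k`.
-/

open Equiv Equiv.Perm

namespace Equiv.Perm

variable {α : Type*} [DecidableEq α] [Fintype α] {σ : Perm α} {a b : α}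

theorem isCycle_cycleOf_mul_swap (ha : σ a ≠ a) (hb : σ b = b) :
    (σ.cycleOf a * swap a b).IsCycle := by
  have hmem := mem_support.2 ha
  obtain ⟨y, t, ht⟩ := List.exists_cons_of_ne_nil (toList_eq_nil_iff.not.2 (not_not.2 hmem))
  obtain rfl : a = y := by simpa [ht] using (toList_getElem_zero σ a hmem).symm
  have hnd : (b :: σ.toList a).Nodup :=
    List.nodup_cons.2 ⟨fun h => ha ((mem_toList_iff.1 h).1.apply_eq_self_iff.2 hb),
      nodup_toList σ a⟩
  -- `swap a b * σ.cycleOf a` is the cycle `σ.toList a` with `b` put in front, and it is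
  -- conjugate to `σ.cycleOf a * swap a b` by `swap a b`
  have hform : swap a b * σ.cycleOf a = List.formPerm (b :: σ.toList a) := by
    rw [ht, List.formPerm_cons_cons, ← ht, formPerm_toList, swap_comm]
  have hcyc : (swap a b * σ.cycleOf a).IsCycle := by
    rw [hform]
    exact List.isCycle_formPerm hnd (by simp [ht])
  simpa [mul_assoc] using hcyc.conj (g := swap a b)

theorem cycleOf_mul_swap_mem_cycleFactorsFinset (ha : σ a ≠ a) (hb : σ b = b) :
    σ.cycleOf a * swap a b ∈ (σ * swap a b).cycleFactorsFinset := by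
  refine mem_cycleFactorsFinset_iff.2 ⟨isCycle_cycleOf_mul_swap ha hb, fun x hx => ?_⟩
  rw [mem_support, mul_apply] at hx
  rw [mul_apply, mul_apply]
  by_cases h : σ.SameCycle a (swap a b x)
  · exact h.cycleOf_apply
  rw [cycleOf_apply_of_not_sameCycle h] at hx ⊢
  obtain rfl | rfl : x = a ∨ x = b := by
    by_contra! hab
    exact hx (swap_apply_of_ne_of_ne hab.1 hab.2)
  · rw [swap_apply_left, hb]
  · exact absurd (by rw [swap_apply_right]) h

theorem card_cycleFactorsFinset_mul_swap (ha : σ a ≠ a) (hb : σ b = b) :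
    #(σ * swap a b).cycleFactorsFinset = #σ.cycleFactorsFinset := by
  have hc := cycleOf_mem_cycleFactorsFinset_iff.2 (mem_support.2 ha)
  have hg := cycleOf_mul_swap_mem_cycleFactorsFinset ha hb
  have key := cycleFactorsFinset_mul_inv_mem_eq_sdiff hg
  rw [mul_inv_rev, swap_inv, mul_assoc, swap_mul_self_mul,
    cycleFactorsFinset_mul_inv_mem_eq_sdiff hc, sdiff_singleton_eq_erase,
    sdiff_singleton_eq_erase] at key
  rw [← card_erase_add_one hg, ← key, card_erase_add_one hc]

theorem support_mul_swap (ha : σ a ≠ a) (hb : σ b = b) :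
    (σ * swap a b).support = insert b σ.support := by
  have hab : a ≠ b := by
    rintro rfl
    exact ha hb
  ext x
  rw [mem_insert, mem_support, mem_support, mul_apply]
  rcases eq_or_ne x a with rfl | hxa
  · simp [hb, ha, hab.symm]
  rcases eq_or_ne x b with rfl | hxb
  · have hax : σ a ≠ x := fun h => hab (σ.injective (h.trans hb.symm))
    simp [hax]
  · simp [swap_apply_of_ne_of_ne hxa hxb, hxb]

theorem card_parts_partition_mul_swap (hb : σ b = b) (hab : a ≠ b) :
    Multiset.card (σ * swap a b).partition.parts + 1 = Multiset.card σ.partition.parts := by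
  have hle := card_le_univ (σ * swap a b).support
  simp only [parts_partition, Multiset.card_add, Multiset.card_replicate] at *
  by_cases ha : σ a = a
  · have hd : Disjoint σ (swap a b) := by
      intro x
      by_cases hx : x = a ∨ x = b
      · rcases hx with rfl | rfl <;> simp [*]
      · push Not at hx
        exact Or.inr (swap_apply_of_ne_of_ne hx.1 hx.2)
    rw [hd.cycleType_mul, Multiset.card_add, (isCycle_swap hab).cycleType, hd.card_support_mul,
      card_support_swap hab] at *
    simp only [Multiset.card_singleton]
    omega
  · have hcard : Multiset.card (σ * swap a b).cycleType = Multiset.card σ.cycleType := by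
      simpa only [cycleType_def, Multiset.card_map, card_val] using
        card_cycleFactorsFinset_mul_swap ha hb
    rw [hcard, support_mul_swap ha hb, card_insert_of_notMem (notMem_support.2 hb)] at *
    omega

theorem card_parts_partition_swap_mul (hb : σ b = b) (hab : a ≠ b) :
    Multiset.card (swap a b * σ).partition.parts + 1 = Multiset.card σ.partition.parts := by
  have hconj : IsConj (swap a b * σ) (σ * swap a b) :=
    isConj_iff.2 ⟨swap a b, by rw [swap_inv, swap_mul_self_mul]⟩
  rw [partition_eq_of_isConj.1 hconj, card_parts_partition_mul_swap hb hab]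

end Equiv.Perm

theorem numCycles_eq_card_parts_partition {n : ℕ} (σ : Perm (Fin n)) :
    numCycles σ = Multiset.card σ.partition.parts := by
  have hfix := card_filter_add_card_filter_not (s := univ) fun x : Fin n => σ x = x
  rw [numCycles, parts_partition, Multiset.card_add, Multiset.card_replicate, Fintype.card_fin]
  rw [card_univ, Fintype.card_fin] at hfix
  change _ + #σ.support = n at hfix
  omega

theorem Fin.card_filter_val_lt_succ {n m : ℕ} (p : Fin n → Prop) [DecidablePred p] (h : m < n) :
    #{j : Fin n | j.val < m + 1 ∧ p j} =
      #{j : Fin n | j.val < m ∧ p j} + if p ⟨m, h⟩ then 1 else 0 := by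
  have hval : ∀ j : Fin n, j.val < m + 1 ↔ j.val < m ∨ j = ⟨m, h⟩ := fun j => by
    rw [Fin.ext_iff]
    exact Nat.lt_succ_iff_lt_or_eq
  split_ifs with hp
  · have hm : (⟨m, h⟩ : Fin n) ∉ ({j : Fin n | j.val < m ∧ p j} : Finset (Fin n)) := by simp
    rw [← card_insert_of_notMem hm]
    congr 1
    ext j
    simp only [mem_filter, mem_univ, true_and, mem_insert, hval]
    grind
  · rw [add_zero]
    congr 1
    ext j
    simp only [mem_filter, mem_univ, true_and, hval]
    grind

namespace AdmIdx

variable {n : ℕ}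

-- `swap j j = 1` encodes the absence of a factor at `j`
def swapAt (f : AdmIdx n) (j : Fin n) : Perm (Fin n) :=
  swap ((f.1 j).getD j) j

def prodSwaps (f : AdmIdx n) : ℕ → Perm (Fin n)
  | 0 => 1
  | m + 1 => if h : m < n then f.swapAt ⟨m, h⟩ * f.prodSwaps m else f.prodSwaps m

theorem prodSwaps_succ (f : AdmIdx n) {m : ℕ} (h : m < n) :
    f.prodSwaps (m + 1) = f.swapAt ⟨m, h⟩ * f.prodSwaps m := by
  rw [prodSwaps, dif_pos h]

theorem getD_le (f : AdmIdx n) (j : Fin n) : (f.1 j).getD j ≤ j := by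
  cases hj : f.1 j with
  | none => exact le_rfl
  | some i => exact (f.2 j i hj).le

theorem eq_of_getD_eq {f g : AdmIdx n} {j : Fin n} (h : (f.1 j).getD j = (g.1 j).getD j) :
    f.1 j = g.1 j := by
  have hf : j ∉ f.1 j := fun hj => lt_irrefl j (f.2 j j hj)
  have hg : j ∉ g.1 j := fun hj => lt_irrefl j (g.2 j j hj)
  generalize f.1 j = o at h hf
  generalize g.1 j = o' at h hg
  cases o <;> cases o' <;> simp_all

theorem prodSwaps_apply_of_le (f : AdmIdx n) {m : ℕ} {x : Fin n} (hx : m ≤ x.val) :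
    f.prodSwaps m x = x := by
  induction m with
  | zero => rfl
  | succ m ih =>
    have h : m < n := by omega
    rw [prodSwaps_succ f h, mul_apply, ih (by omega), swapAt]
    have := f.getD_le ⟨m, h⟩
    have hlt : (⟨m, h⟩ : Fin n) < x := Fin.mk_lt_mk.2 (by omega)
    exact swap_apply_of_ne_of_ne (this.trans_lt hlt).ne' hlt.ne'

theorem prodSwaps_succ_apply_self (f : AdmIdx n) {m : ℕ} (h : m < n) :
    f.prodSwaps (m + 1) ⟨m, h⟩ = (f.1 ⟨m, h⟩).getD ⟨m, h⟩ := by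
  rw [prodSwaps_succ f h, mul_apply, prodSwaps_apply_of_le f (x := ⟨m, h⟩) le_rfl, swapAt,
    swap_apply_right]

theorem prodSwaps_congr {f g : AdmIdx n} {m : ℕ} (h : ∀ j : Fin n, j.val < m → f.1 j = g.1 j) :
    f.prodSwaps m = g.prodSwaps m := by
  induction m with
  | zero => rfl
  | succ m ih =>
    rw [prodSwaps, prodSwaps, ih fun j hj => h j (by omega)]
    split_ifs with hm
    · rw [swapAt, swapAt, h ⟨m, hm⟩ (by simp)]
    · rfl

theorem eq_of_prodSwaps_eq {f g : AdmIdx n} {m : ℕ} (hm : m ≤ n)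
    (h : f.prodSwaps m = g.prodSwaps m) (j : Fin n) (hj : j.val < m) : f.1 j = g.1 j := by
  induction m with
  | zero => omega
  | succ m ih =>
    have hmn : m < n := by omega
    have htop : f.1 ⟨m, hmn⟩ = g.1 ⟨m, hmn⟩ := eq_of_getD_eq <| by
      rw [← prodSwaps_succ_apply_self f hmn, ← prodSwaps_succ_apply_self g hmn, h]
    rcases Nat.lt_succ_iff_lt_or_eq.1 hj with hj | hj
    · refine ih (by omega) ?_ hj
      rwa [prodSwaps_succ f hmn, prodSwaps_succ g hmn, swapAt, swapAt, htop, mul_right_inj] at h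
    · obtain rfl : j = ⟨m, hmn⟩ := Fin.ext hj
      exact htop

theorem exists_prodSwaps_eq {m : ℕ} (hm : m ≤ n) (σ : Perm (Fin n))
    (hσ : ∀ x : Fin n, m ≤ x.val → σ x = x) : ∃ f : AdmIdx n, f.prodSwaps m = σ := by
  induction m generalizing σ with
  | zero => exact ⟨⟨fun _ => none, by simp⟩, (Perm.ext fun x => (hσ x (Nat.zero_le _)).symm)⟩
  | succ m ih =>
    have hmn : m < n := by omega
    set b : Fin n := ⟨m, hmn⟩
    have hσb : σ b ≤ b := by
      by_contra! hlt
      exact hlt.ne (σ.injective (hσ (σ b) hlt)).symm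
    obtain ⟨f, hf⟩ := ih (by omega) (swap (σ b) b * σ) fun x hx => by
      rcases eq_or_lt_of_le hx with hx | hx
      · obtain rfl : b = x := Fin.ext hx
        rw [mul_apply, swap_apply_left]
      · have hbx : b < x := hx
        rw [mul_apply, hσ x hx, swap_apply_of_ne_of_ne (hσb.trans_lt hbx).ne' hbx.ne']
    let g : AdmIdx n := ⟨Function.update f.1 b (if σ b < b then some (σ b) else none), by
      intro j i hi
      rcases eq_or_ne j b with rfl | hj
      · rw [Function.update_self] at hi
        split_ifs at hi with hlt
        · exact Option.some_inj.1 hi ▸ hlt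
        · cases hi
      · rw [Function.update_of_ne hj] at hi
        exact f.2 j i hi⟩
    refine ⟨g, ?_⟩
    have hgb : (g.1 b).getD b = σ b := by
      change (Function.update f.1 b _ b).getD b = σ b
      rw [Function.update_self]
      split_ifs with hlt
      · rfl
      · exact (hσb.antisymm (not_lt.1 hlt)).symm
    rw [prodSwaps_succ g hmn, swapAt, hgb, prodSwaps_congr (g := f) ?_, hf, swap_mul_self_mul]
    intro j hj
    exact Function.update_of_ne (fun h => by simp [h, b] at hj) _ _

theorem card_parts_partition_prodSwaps (f : AdmIdx n) {m : ℕ} (hm : m ≤ n) :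
    Multiset.card (f.prodSwaps m).partition.parts + #{j : Fin n | j.val < m ∧ (f.1 j).isSome} =
      n := by
  induction m with
  | zero => simp [prodSwaps, parts_partition]
  | succ m ih =>
    have hmn : m < n := by omega
    have hprev := ih hmn.le
    rw [Fin.card_filter_val_lt_succ _ hmn, prodSwaps_succ f hmn, swapAt]
    cases hf : f.1 ⟨m, hmn⟩ with
    | none =>
      rwa [Option.getD_none, swap_self, ← Perm.one_def, one_mul, Option.isSome_none,
        if_neg Bool.false_ne_true, add_zero]
    | some i =>
      have := card_parts_partition_swap_mul
        (f.prodSwaps_apply_of_le (m := m) (x := ⟨m, hmn⟩) le_rfl) (f.2 _ i hf).ne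
      simp only [Option.getD_some, Option.isSome_some, if_true]
      omega

theorem prodSwaps_injective : Function.Injective fun f : AdmIdx n => f.prodSwaps n :=
  fun _ _ h => Subtype.ext <| funext fun j => eq_of_prodSwaps_eq le_rfl h j j.isLt

theorem prodSwaps_surjective : Function.Surjective fun f : AdmIdx n => f.prodSwaps n :=
  fun σ => exists_prodSwaps_eq le_rfl σ fun x hx => absurd x.isLt (by omega)

theorem numCycles_prodSwaps_add_admSize (f : AdmIdx n) :
    numCycles (f.prodSwaps n) + admSize f = n := by
  have := card_parts_partition_prodSwaps f le_rfl
  simp only [Fin.is_lt, true_and] at this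
  rwa [numCycles_eq_card_parts_partition]

end AdmIdx

/-- The dimension of the degree-`k` component of
`H^*(Cₙ(2); ℂ)` — i.e. the number of admissible monomials of length `k` — equals the
unsigned Stirling number of the first kind `c(n, n-k)`, the number of permutations of
`{1, …, n}` with exactly `n - k` cycles. -/
theorem dim_eq_stirling (n k : ℕ) (hk : k < n) :
    Nat.card { f : AdmIdx n // admSize f = k } =
      Nat.card { σ : Equiv.Perm (Fin n) // numCycles σ = n - k } := by
  let e := Equiv.ofBijective _ ⟨AdmIdx.prodSwaps_injective (n := n), AdmIdx.prodSwaps_surjective⟩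
  refine Nat.card_congr (e.subtypeEquiv fun f => ?_)
  have := f.numCycles_prodSwaps_add_admSize
  change admSize f = k ↔ numCycles (f.prodSwaps n) = n - k
  omega
end

section
/- Let n = 2k and let A = H*(Cₙ(d);ℂ) with d odd, presented as the commutative algebra with generators A_{i,j} = −A_{j,i} of degree d−1 and relations A_{i,j}A_{i,k} − A_{i,j}A_{j,k} + A_{i,k}A_{j,k} = 0. Then the antisymmetrizer x = Σ_{σ∈Sₙ} sgn(σ) A_{σ(1),σ(2)} A_{σ(3),σ(4)} ⋯ A_{σ(n-1),σ(n)} is a nonzero element of the degree k(d−1) component, and every τ ∈ Sₙ acts on x by τ·x = sgn(τ)·x. -/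
open Finset Equiv MvPolynomial

/-- Index type for the generators `A_{i,j}`, `i < j`. -/
def OPairs (n : ℕ) : Type := { p : Fin n × Fin n // p.1 < p.2 }

/-- The free commutative algebra on the generators `A_{i,j}`, `i < j` (for `d` odd the
generators of `H^*(Cₙ(d); ℂ)` have even degree `d - 1`, hence commute). -/
abbrev FreeOdd (n : ℕ) := MvPolynomial (OPairs n) ℂ

/-- The ideal of relations of `H^*(Cₙ(d); ℂ)` for `d` odd: the squares `A_{i,j}² = 0`
and the Arnold relations `A_{i,j}A_{i,k} - A_{i,j}A_{j,k} + A_{i,k}A_{j,k} = 0`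
for `i < j < k`. -/
noncomputable def oddRelIdeal (n : ℕ) : Ideal (FreeOdd n) :=
  Ideal.span
    ({x | ∃ (i j : Fin n) (h : i < j), x = X (σ := OPairs n) ⟨(i, j), h⟩ ^ 2} ∪
      {x | ∃ (i j k : Fin n) (hij : i < j) (hjk : j < k),
        x = X (σ := OPairs n) ⟨(i, j), hij⟩ * X ⟨(i, k), hij.trans hjk⟩ -
              X (σ := OPairs n) ⟨(i, j), hij⟩ * X ⟨(j, k), hjk⟩ +
              X (σ := OPairs n) ⟨(i, k), hij.trans hjk⟩ * X ⟨(j, k), hjk⟩})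

/-- The cohomology algebra `H^*(Cₙ(d); ℂ)` for `d` odd: the commutative algebra with
generators `A_{i,j} = -A_{j,i}` (of even degree `d - 1`) modulo the Arnold relations. -/
abbrev OSOdd (n : ℕ) := FreeOdd n ⧸ oddRelIdeal n

/-- The generator `A_{i,j}` in `H^*(Cₙ(d); ℂ)` (`d` odd), for arbitrary `i, j`, with
the conventions `A_{i,j} = -A_{j,i}` and `A_{i,i} = 0`. -/
noncomputable def Agen {n : ℕ} (i j : Fin n) : OSOdd n :=
  if h : i < j then Ideal.Quotient.mk (oddRelIdeal n) (X ⟨(i, j), h⟩)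
  else if h' : j < i then -(Ideal.Quotient.mk (oddRelIdeal n) (X ⟨(j, i), h'⟩)) else 0

/-- The `s`-th even position `2s` in `Fin (2k)`. -/
def dbl {k : ℕ} (s : Fin k) : Fin (2 * k) := ⟨2 * s.1, by omega⟩

/-- The `s`-th odd position `2s + 1` in `Fin (2k)`. -/
def dbl1 {k : ℕ} (s : Fin k) : Fin (2 * k) := ⟨2 * s.1 + 1, by omega⟩

/-!
Send `A_{i,j}` to `e_i ∧ e_j` in the exterior algebra of `ℂⁿ`. Products of two vectors are
central there, so this is a map of commutative algebras, and it kills every relation since each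
monomial of a relation repeats an index. The antisymmetrizer is sent to
`∑_σ sgn(σ) e_{σ(1)} ∧ ⋯ ∧ e_{σ(n)} = n! e_1 ∧ ⋯ ∧ e_n ≠ 0`.
The sign rule is the substitution `σ ↦ τσ` in the sum.
-/

open ExteriorAlgebra

theorem Equiv.Perm.sum_sign_smul_mul_left {α M : Type*} [Fintype α] [DecidableEq α]
    [AddCommGroup M] (f : Perm α → M) (τ : Perm α) :
    ∑ σ, (sign σ : ℤ) • f (τ * σ) = (sign τ : ℤ) • ∑ σ, (sign σ : ℤ) • f σ := by
  rw [smul_sum]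
  refine Fintype.sum_equiv (Equiv.mulLeft τ) _ _ fun σ => ?_
  rw [Equiv.coe_mulLeft, smul_smul, sign_mul, Units.val_mul, ← mul_assoc,
    Int.units_coe_mul_self, one_mul]

theorem List.prod_ofFn_eq_prod_ofFn_dbl_mul_dbl1 {A : Type*} [Monoid A] {k : ℕ}
    (f : Fin (2 * k) → A) :
    (List.ofFn f).prod = (List.ofFn fun s : Fin k => f (dbl s) * f (dbl1 s)).prod := by
  rw [List.ofFn_mul', List.prod_flatten, List.map_ofFn]
  congr 1
  refine List.ofFn_inj.2 (funext fun s => ?_)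
  simp [dbl, dbl1]

namespace ExteriorAlgebra

theorem ι_mul_ι_mem_center {R M : Type*} [CommRing R] [AddCommGroup M] [Module R M]
    (u v : M) : ι R u * ι R v ∈ Subalgebra.center R (ExteriorAlgebra R M) := by
  rw [Subalgebra.mem_center_iff]
  intro g
  induction g using ExteriorAlgebra.induction with
  | algebraMap r => exact Algebra.commutes r _
  | ι w =>
    have anticomm := fun x y : M => eq_neg_of_add_eq_zero_left (ι_add_mul_swap (R := R) x y)
    rw [← mul_assoc, anticomm w u, neg_mul, mul_assoc, anticomm w v, mul_neg, neg_neg,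
      mul_assoc]
  | mul a b ha hb => rw [mul_assoc, hb, ← mul_assoc, ha, mul_assoc]
  | add a b ha hb => rw [add_mul, mul_add, ha, hb]

theorem ιMulti_basisFun_ne_zero (R : Type*) [CommRing R] [Nontrivial R] (n : ℕ) :
    ιMulti R n (Pi.basisFun R (Fin n)) ≠ 0 := by
  have h := (exteriorPower.ιMulti_family_linearIndependent_ofBasis R n
    (Pi.basisFun R (Fin n))).ne_zero
      (Set.powersetCard.ofFinEmbEquiv (OrderIso.refl (Fin n)).toOrderEmbedding)
  rw [exteriorPower.ιMulti_family, Equiv.symm_apply_apply] at h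
  exact fun h0 => h (Subtype.ext (by simpa using h0))

end ExteriorAlgebra

namespace OSOdd

variable {n : ℕ}

local notation "Λ" n => Subalgebra.center ℂ (ExteriorAlgebra ℂ (Fin n → ℂ))

noncomputable def wedge (i j : Fin n) : Λ n :=
  ⟨ι ℂ (Pi.basisFun ℂ (Fin n) i) * ι ℂ (Pi.basisFun ℂ (Fin n) j), ι_mul_ι_mem_center _ _⟩

theorem coe_wedge_mul_wedge (a b c d : Fin n) :
    ((wedge a b * wedge c d : Λ n) : ExteriorAlgebra ℂ (Fin n → ℂ)) =
      ιMulti ℂ 4 (Pi.basisFun ℂ (Fin n) ∘ ![a, b, c, d]) := by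
  simp [wedge, ιMulti_apply, mul_assoc, Matrix.vecTail]

theorem wedge_mul_wedge_eq_zero {a b c d : Fin n} (h : a = c ∨ a = d ∨ b = c ∨ b = d) :
    wedge a b * wedge c d = 0 := by
  refine Subtype.ext ?_
  rw [coe_wedge_mul_wedge, ZeroMemClass.coe_zero]
  rcases h with h | h | h | h
  · exact AlternatingMap.map_eq_zero_of_eq _ _ (i := 0) (j := 2) (by simp [h]) (by decide)
  · exact AlternatingMap.map_eq_zero_of_eq _ _ (i := 0) (j := 3) (by simp [h]) (by decide)
  · exact AlternatingMap.map_eq_zero_of_eq _ _ (i := 1) (j := 2) (by simp [h]) (by decide)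
  · exact AlternatingMap.map_eq_zero_of_eq _ _ (i := 1) (j := 3) (by simp [h]) (by decide)

theorem wedge_swap (i j : Fin n) : wedge j i = -wedge i j :=
  Subtype.ext (eq_neg_of_add_eq_zero_left (ι_add_mul_swap _ _))

theorem wedge_self (i : Fin n) : wedge i i = 0 :=
  Subtype.ext (ι_sq_zero _)

-- Named rather than a lambda: projections of `p : OPairs n` only typecheck after unfolding
-- `OPairs`, which makes `rw` fail on terms built from them.
noncomputable def wedgeOfPair (p : OPairs n) : Λ n :=
  wedge p.1.1 p.1.2

theorem aeval_wedgeOfPair_X {i j : Fin n} (h : i < j) :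
    aeval wedgeOfPair (X (R := ℂ) (σ := OPairs n) ⟨(i, j), h⟩) = wedge i j :=
  aeval_X _ _

theorem oddRelIdeal_le_ker_aeval_wedgeOfPair :
    oddRelIdeal n ≤ RingHom.ker (aeval (wedgeOfPair (n := n))) := by
  refine Ideal.span_le.2 ?_
  rintro x (⟨i, j, hij, rfl⟩ | ⟨i, j, l, hij, hjl, rfl⟩)
  · rw [SetLike.mem_coe, RingHom.mem_ker, map_pow, aeval_wedgeOfPair_X, sq]
    exact wedge_mul_wedge_eq_zero (Or.inl rfl)
  · simp only [SetLike.mem_coe, RingHom.mem_ker, map_add, map_sub, map_mul, aeval_wedgeOfPair_X]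
    rw [wedge_mul_wedge_eq_zero (Or.inl rfl),
      wedge_mul_wedge_eq_zero (Or.inr (Or.inr (Or.inl rfl))),
      wedge_mul_wedge_eq_zero (Or.inr (Or.inr (Or.inr rfl))), sub_zero, add_zero]

noncomputable def toWedge : OSOdd n →ₐ[ℂ] Λ n :=
  Ideal.Quotient.liftₐ _ (aeval (wedgeOfPair (n := n)))
    fun _ ha => RingHom.mem_ker.1 (oddRelIdeal_le_ker_aeval_wedgeOfPair ha)

theorem toWedge_mk (f : FreeOdd n) :
    toWedge (Ideal.Quotient.mk _ f) = aeval wedgeOfPair f :=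
  rfl

theorem toWedge_Agen (i j : Fin n) : toWedge (Agen i j) = wedge i j := by
  unfold Agen
  split_ifs with hij hji
  · rw [toWedge_mk, aeval_wedgeOfPair_X]
  · rw [map_neg, toWedge_mk, aeval_wedgeOfPair_X, wedge_swap j i]
  · rw [le_antisymm (not_lt.1 hji) (not_lt.1 hij), map_zero, wedge_self]

theorem coe_prod_wedge {k : ℕ} (v : Fin (2 * k) → Fin n) :
    ((∏ s : Fin k, wedge (v (dbl s)) (v (dbl1 s)) : Λ n) : ExteriorAlgebra ℂ (Fin n → ℂ)) =
      ιMulti ℂ (2 * k) (Pi.basisFun ℂ (Fin n) ∘ v) := by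
  rw [ιMulti_apply, List.prod_ofFn_eq_prod_ofFn_dbl_mul_dbl1, ← Fin.prod_ofFn,
    ← Subalgebra.coe_val, map_list_prod, List.map_ofFn]
  rfl

noncomputable def antisymmetrizer (k : ℕ) : OSOdd (2 * k) :=
  ∑ σ : Perm (Fin (2 * k)), (Perm.sign σ : ℤ) • ∏ s : Fin k, Agen (σ (dbl s)) (σ (dbl1 s))

theorem coe_toWedge_antisymmetrizer (k : ℕ) :
    (toWedge (antisymmetrizer k) : ExteriorAlgebra ℂ (Fin (2 * k) → ℂ)) =
      ((2 * k).factorial : ℂ) • ιMulti ℂ (2 * k) (Pi.basisFun ℂ (Fin (2 * k))) := by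
  simp only [antisymmetrizer, map_sum, map_zsmul, map_prod, toWedge_Agen]
  rw [AddSubmonoidClass.coe_finsetSum]
  simp only [AddSubgroupClass.coe_zsmul, coe_prod_wedge, AlternatingMap.map_perm,
    Units.smul_def, smul_smul, Int.units_coe_mul_self, one_smul, sum_const, card_univ,
    Fintype.card_perm, Fintype.card_fin, Nat.cast_smul_eq_nsmul]

theorem antisymmetrizer_ne_zero (k : ℕ) : antisymmetrizer k ≠ 0 := fun h =>
  smul_ne_zero (Nat.cast_ne_zero.2 (Nat.factorial_ne_zero _)) (ιMulti_basisFun_ne_zero ℂ (2 * k)) <| by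
    rw [← coe_toWedge_antisymmetrizer, h, map_zero, ZeroMemClass.coe_zero]

end OSOdd

open OSOdd in
theorem antisymmetrizer_spans_sign_general (k : ℕ) :
    (∑ σ : Perm (Fin (2 * k)), (Perm.sign σ : ℤ) •
        ∏ s : Fin k, Agen (σ (dbl s)) (σ (dbl1 s))) ≠ 0 ∧
      ∀ τ : Perm (Fin (2 * k)),
        (∑ σ : Perm (Fin (2 * k)), (Perm.sign σ : ℤ) •
            ∏ s : Fin k, Agen (τ (σ (dbl s))) (τ (σ (dbl1 s)))) =
          (Perm.sign τ : ℤ) •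
            ∑ σ : Perm (Fin (2 * k)), (Perm.sign σ : ℤ) •
              ∏ s : Fin k, Agen (σ (dbl s)) (σ (dbl1 s)) :=
  ⟨antisymmetrizer_ne_zero k, fun τ =>
    Perm.sum_sign_smul_mul_left (fun σ => ∏ s : Fin k, Agen (σ (dbl s)) (σ (dbl1 s))) τ⟩

/-- Let `n = 2k` and let `A = H^*(Cₙ(d); ℂ)` with `d` odd.  The
antisymmetrizer `x = ∑_{σ ∈ Sₙ} sgn(σ) A_{σ(1),σ(2)} A_{σ(3),σ(4)} ⋯ A_{σ(n-1),σ(n)}`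
(a homogeneous element of degree `k(d-1)`, being a sum of products of `k` generators)
is nonzero, and every `τ ∈ Sₙ` acts on it by `τ · x = sgn(τ) x` (the action permutes
the indices, `τ · A_{i,j} = A_{τ(i),τ(j)}`). -/
theorem antisymmetrizer_spans_sign (k : ℕ) (hk : 1 ≤ k) :
    (∑ σ : Perm (Fin (2 * k)), (Perm.sign σ : ℤ) •
        ∏ s : Fin k, Agen (σ (dbl s)) (σ (dbl1 s))) ≠ 0 ∧
      ∀ τ : Perm (Fin (2 * k)),
        (∑ σ : Perm (Fin (2 * k)), (Perm.sign σ : ℤ) •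
            ∏ s : Fin k, Agen (τ (σ (dbl s))) (τ (σ (dbl1 s)))) =
          (Perm.sign τ : ℤ) •
            ∑ σ : Perm (Fin (2 * k)), (Perm.sign σ : ℤ) •
              ∏ s : Fin k, Agen (σ (dbl s)) (σ (dbl1 s)) :=
  antisymmetrizer_spans_sign_general k
end
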